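/- arXiv:1903.11046 — 7 statements merged into one kernel-verified Lean document; each statement's English description precedes it below -/
import Mathlib

section
/- Let k be a commutative field, let 𝒜 be a finite-dimensional central simple k-algebra, and let K/k be an extension of commutative fields. Then the K-algebra Ω = 𝒜 ⊗_k K is a central simple K-algebra (its center is exactly K and it is a simple ring), and the dimension of Ω as a K-vector space equals the dimension of 𝒜 as a k-vector space. -/
/-!
Fix a `k`-basis `(bᵢ)` of `K`, so that every element of `𝒜 ⊗ K` is uniquely `∑ aᵢ ⊗ bᵢ`.
Multiplication by `a ⊗ 1` on either side acts on the coordinates `aᵢ`, so an element commuting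
with `𝒜 ⊗ 1` has central coordinates; these lie in `k` because `𝒜` is central, and the element
lies in `1 ⊗ K`. This gives the centre. For simplicity, take a nonzero element of a two-sided
ideal with the fewest nonzero coordinates. Since `𝒜` is simple, the ideal also contains an element
with no more coordinates, one of which is `1`; its commutators with the `a ⊗ 1` have strictly
fewer coordinates, hence vanish. So the ideal contains a nonzero `1 ⊗ c`, which is a unit.
-/

open TensorProduct

attribute [local instance] Algebra.TensorProduct.rightAlgebra

namespace Algebra.TensorProduct

section Coordinates

variable {k A B κ : Type*} [CommSemiring k] [Semiring A] [Algebra k A] [Semiring B] [Algebra k B]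
  [DecidableEq κ] (b : Module.Basis κ k B)

lemma equivFinsuppOfBasisRight_tmul_one_mul (a : A) (x : A ⊗[k] B) (i : κ) :
    equivFinsuppOfBasisRight b ((a ⊗ₜ[k] (1 : B)) * x) i = a * equivFinsuppOfBasisRight b x i := by
  induction x with
  | zero => simp
  | tmul m c => simp
  | add u v hu hv => simp [mul_add, hu, hv]

lemma equivFinsuppOfBasisRight_mul_tmul_one (a : A) (x : A ⊗[k] B) (i : κ) :
    equivFinsuppOfBasisRight b (x * (a ⊗ₜ[k] (1 : B))) i = equivFinsuppOfBasisRight b x i * a := by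
  induction x with
  | zero => simp
  | tmul m c => simp
  | add u v hu hv => simp [add_mul, hu, hv]

lemma support_equivFinsuppOfBasisRight_tmul_one_mul_subset (a : A) (x : A ⊗[k] B) :
    (equivFinsuppOfBasisRight b ((a ⊗ₜ[k] (1 : B)) * x)).support ⊆
      (equivFinsuppOfBasisRight b x).support := fun j => by
  simp only [Finsupp.mem_support_iff, equivFinsuppOfBasisRight_tmul_one_mul]
  exact right_ne_zero_of_mul

lemma support_equivFinsuppOfBasisRight_mul_tmul_one_subset (a : A) (x : A ⊗[k] B) :
    (equivFinsuppOfBasisRight b (x * (a ⊗ₜ[k] (1 : B)))).support ⊆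
      (equivFinsuppOfBasisRight b x).support := fun j => by
  simp only [Finsupp.mem_support_iff, equivFinsuppOfBasisRight_mul_tmul_one]
  exact left_ne_zero_of_mul

lemma equivFinsuppOfBasisRight_mem_center_of_commute {x : A ⊗[k] B}
    (hx : ∀ a : A, Commute (a ⊗ₜ[k] (1 : B)) x) (i : κ) :
    equivFinsuppOfBasisRight b x i ∈ Subalgebra.center k A :=
  Subalgebra.mem_center_iff.2 fun a => by
    rw [← equivFinsuppOfBasisRight_tmul_one_mul, (hx a).eq, equivFinsuppOfBasisRight_mul_tmul_one]

end Coordinates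

theorem finrank_right (k A K : Type*) [CommRing k] [StrongRankCondition k] [Ring A] [Algebra k A]
    [Module.Free k A] [CommRing K] [StrongRankCondition K] [Algebra k K] :
    Module.finrank K (A ⊗[k] K) = Module.finrank k A := by
  let e : A ⊗[k] K ≃ₗ[K] K ⊗[k] A :=
    (Algebra.TensorProduct.comm k A K).toAddEquiv.toLinearEquiv fun c x => by
      show Algebra.TensorProduct.comm k A K (c • x) = c • _
      rw [Algebra.smul_def, map_mul, Algebra.smul_def]
      rfl
  rw [e.finrank_eq, Module.finrank_baseChange]

variable {k A : Type*} [Field k] [Ring A] [Algebra k A]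

theorem exists_one_tmul_eq_of_commute {B : Type*} [Ring B] [Algebra k B] [Algebra.IsCentral k A]
    {x : A ⊗[k] B} (hx : ∀ a : A, Commute (a ⊗ₜ[k] (1 : B)) x) : ∃ c : B, (1 : A) ⊗ₜ[k] c = x := by
  classical
  let b := Module.Basis.ofVectorSpace k B
  have hcoord (i) : ∃ r : k, algebraMap k A r = equivFinsuppOfBasisRight b x i :=
    Algebra.mem_bot.1 <|
      Algebra.IsCentral.out (equivFinsuppOfBasisRight_mem_center_of_commute b hx i)
  choose r hr using hcoord
  refine ⟨∑ i ∈ (equivFinsuppOfBasisRight b x).support, r i • b i, ?_⟩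
  conv_rhs => rw [← (equivFinsuppOfBasisRight b).symm_apply_apply x,
    equivFinsuppOfBasisRight_symm_apply]
  simp only [Finsupp.sum, tmul_sum, ← hr, Algebra.algebraMap_eq_smul_one, smul_tmul]

theorem isCentral_right [Algebra.IsCentral k A] (K : Type*) [CommRing K] [Algebra k K] :
    Algebra.IsCentral K (A ⊗[k] K) where
  out z hz := by
    obtain ⟨c, rfl⟩ := exists_one_tmul_eq_of_commute fun a => Subalgebra.mem_center_iff.1 hz _
    exact Algebra.mem_bot.2 ⟨c, rfl⟩

section CoeffIdeal

variable {B κ : Type*} [Ring B] [Algebra k B] [DecidableEq κ] (b : Module.Basis κ k B)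

def coeffIdeal (I : TwoSidedIdeal (A ⊗[k] B)) (s : Finset κ) (i : κ) : TwoSidedIdeal A :=
  .mk'
    {r | ∃ y ∈ I, (equivFinsuppOfBasisRight b y).support ⊆ s ∧ equivFinsuppOfBasisRight b y i = r}
    ⟨0, I.zero_mem, by simp, by simp⟩
    (by
      rintro _ _ ⟨y, hyI, hys, rfl⟩ ⟨z, hzI, hzs, rfl⟩
      refine ⟨y + z, I.add_mem hyI hzI, ?_, by simp⟩
      rw [map_add]
      exact Finsupp.support_add.trans (Finset.union_subset hys hzs))
    (by
      rintro _ ⟨y, hyI, hys, rfl⟩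
      exact ⟨-y, I.neg_mem hyI, by simpa using hys, by simp⟩)
    (by
      rintro a _ ⟨y, hyI, hys, rfl⟩
      exact ⟨(a ⊗ₜ 1) * y, I.mul_mem_left _ _ hyI,
        (support_equivFinsuppOfBasisRight_tmul_one_mul_subset b a y).trans hys,
        equivFinsuppOfBasisRight_tmul_one_mul b a y i⟩)
    (by
      rintro _ a ⟨y, hyI, hys, rfl⟩
      exact ⟨y * (a ⊗ₜ 1), I.mul_mem_right _ _ hyI,
        (support_equivFinsuppOfBasisRight_mul_tmul_one_subset b a y).trans hys,
        equivFinsuppOfBasisRight_mul_tmul_one b a y i⟩)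

lemma mem_coeffIdeal {I : TwoSidedIdeal (A ⊗[k] B)} {s : Finset κ} {i : κ} {r : A} :
    r ∈ coeffIdeal b I s i ↔
      ∃ y ∈ I, (equivFinsuppOfBasisRight b y).support ⊆ s ∧ equivFinsuppOfBasisRight b y i = r :=
  TwoSidedIdeal.mem_mk' ..

end CoeffIdeal

theorem exists_ne_zero_mem_forall_commute {B : Type*} [Ring B] [Algebra k B] [IsSimpleRing A]
    {I : TwoSidedIdeal (A ⊗[k] B)} (hI : I ≠ ⊥) : ∃ y ∈ I, y ≠ 0 ∧ ∀ a : A, Commute (a ⊗ₜ[k] (1 : B)) y := by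
  classical
  let b := Module.Basis.ofVectorSpace k B
  let e := equivFinsuppOfBasisRight (M := A) b
  obtain ⟨x₀, hx₀I, hx₀⟩ : ∃ x ∈ I, x ≠ 0 := by
    by_contra! h
    exact hI (eq_bot_iff.2 fun x hx => (TwoSidedIdeal.mem_bot _).2 (h x hx))
  obtain ⟨x, ⟨hxI, hx0⟩, hmin⟩ := (InvImage.wf (fun x => (e x).support.card) wellFounded_lt).has_min
    {x | x ∈ I ∧ x ≠ 0} ⟨x₀, hx₀I, hx₀⟩
  obtain ⟨i₀, hi₀⟩ : (e x).support.Nonempty := by simpa [e] using hx0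
  obtain ⟨y, hyI, hys, hy1⟩ : ∃ y ∈ I, (e y).support ⊆ (e x).support ∧ e y i₀ = 1 :=
    (mem_coeffIdeal ..).1 <| IsSimpleRing.one_mem_of_ne_zero_mem _ (Finsupp.mem_support_iff.1 hi₀)
      ((mem_coeffIdeal ..).2 ⟨x, hxI, subset_rfl, rfl⟩)
  refine ⟨y, hyI, fun hy0 => by simp [hy0] at hy1, fun a => ?_⟩
  let w := (a ⊗ₜ[k] (1 : B)) * y - y * (a ⊗ₜ[k] (1 : B))
  have hw (j) : e w j = a * e y j - e y j * a := by
    simp only [w, e, map_sub, Finsupp.sub_apply, equivFinsuppOfBasisRight_tmul_one_mul,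
      equivFinsuppOfBasisRight_mul_tmul_one]
  have hws : (e w).support ⊆ (e x).support.erase i₀ := fun j hj => by
    rw [Finsupp.mem_support_iff, hw] at hj
    refine Finset.mem_erase.2 ⟨fun hji => hj (by simp [hji, hy1]), hys ?_⟩
    exact Finsupp.mem_support_iff.2 fun h => hj (by simp [h])
  by_contra hcomm
  refine hmin w ⟨I.sub_mem (I.mul_mem_left _ _ hyI) (I.mul_mem_right _ _ hyI),
    sub_ne_zero.2 hcomm⟩ ?_
  exact (Finset.card_le_card hws).trans_lt (Finset.card_erase_lt_of_mem hi₀)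

theorem isSimpleRing_of_isCentral [Algebra.IsCentral k A] [IsSimpleRing A] (D : Type*)
    [DivisionRing D] [Algebra k D] : IsSimpleRing (A ⊗[k] D) := by
  have := nontrivial_of_algebraMap_injective_of_flat_left k A D
    (FaithfulSMul.algebraMap_injective k D)
  refine .of_eq_bot_or_eq_top fun I => or_iff_not_imp_left.2 fun hI => ?_
  obtain ⟨_, hyI, hy0, hy⟩ := exists_ne_zero_mem_forall_commute hI
  obtain ⟨d, rfl⟩ := exists_one_tmul_eq_of_commute hy
  have hd : d ≠ 0 := by rintro rfl; simp at hy0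
  have h1 := I.mul_mem_left ((1 : A) ⊗ₜ[k] d⁻¹) _ hyI
  rw [tmul_mul_tmul, mul_one, inv_mul_cancel₀ hd, ← one_def] at h1
  exact I.one_mem_iff.1 h1

end Algebra.TensorProduct

theorem baseChange_isCentralSimple_and_finrank_eq_general
    (k : Type*) [Field k]
    (𝒜 : Type*) [Ring 𝒜] [Algebra k 𝒜]
    [Algebra.IsCentral k 𝒜] [IsSimpleRing 𝒜]
    (K : Type*) [Field K] [Algebra k K] :
    Algebra.IsCentral K (𝒜 ⊗[k] K) ∧ IsSimpleRing (𝒜 ⊗[k] K) ∧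
      Module.finrank K (𝒜 ⊗[k] K) = Module.finrank k 𝒜 :=
  ⟨Algebra.TensorProduct.isCentral_right K, Algebra.TensorProduct.isSimpleRing_of_isCentral K,
    Algebra.TensorProduct.finrank_right k 𝒜 K⟩

/-- **Proposition 1.a.** If `𝒜` is a finite-dimensional central simple `k`-algebra and `K/k` is
an extension of commutative fields, then `Ω = 𝒜 ⊗[k] K` (with its `K`-algebra structure coming
from the right tensor factor) is a central simple `K`-algebra of the same dimension:
its center is exactly `K`, it is a simple ring, and `dim_K Ω = dim_k 𝒜`. -/
theorem baseChange_isCentralSimple_and_finrank_eq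
    (k : Type*) [Field k]
    (𝒜 : Type*) [Ring 𝒜] [Algebra k 𝒜] [FiniteDimensional k 𝒜]
    [Algebra.IsCentral k 𝒜] [IsSimpleRing 𝒜]
    (K : Type*) [Field K] [Algebra k K] :
    Algebra.IsCentral K (𝒜 ⊗[k] K) ∧ IsSimpleRing (𝒜 ⊗[k] K) ∧
      Module.finrank K (𝒜 ⊗[k] K) = Module.finrank k 𝒜 :=
  baseChange_isCentralSimple_and_finrank_eq_general k 𝒜 K
end

section
/- Let K be a commutative field equipped with an ℝ-algebra structure (i.e. a field extension of ℝ), and let ℍ denote the division ring of Hamilton quaternions over ℝ. Then ℍ ⊗_ℝ K is a division ring if and only if the quadratic form x₁² + x₂² + x₃² + x₄² has only the trivial zero on K, i.e. if and only if −1 is not a sum of three squares in K. -/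
/-!
Extending scalars identifies `ℍ ⊗[ℝ] K` with the quaternion algebra `ℍ[K]` over `K`. There
`q * star q = normSq q = q₀² + q₁² + q₂² + q₃²`, so `q` is invertible exactly when its norm is,
and `ℍ[K]` is a division ring iff the norm form has only the trivial zero. A nontrivial zero of
the norm form can be rescaled so that one coordinate is `1`, which writes `-1` as a sum of the
three remaining squares, and conversely.
-/

open TensorProduct Quaternion

def IsDivisionRing (A : Type*) [Semiring A] : Prop :=
  Nontrivial A ∧ ∀ x : A, x ≠ 0 → IsUnit x

theorem IsDivisionRing.of_ringEquiv {A B : Type*} [Semiring A] [Semiring B] (e : A ≃+* B)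
    (h : IsDivisionRing A) : IsDivisionRing B := by
  obtain ⟨_, hA⟩ := h
  refine ⟨e.injective.nontrivial, fun y hy => ?_⟩
  simpa using (hA (e.symm y) (by simpa using hy)).map e

theorem RingEquiv.isDivisionRing_iff {A B : Type*} [Semiring A] [Semiring B] (e : A ≃+* B) :
    IsDivisionRing A ↔ IsDivisionRing B :=
  ⟨.of_ringEquiv e, .of_ringEquiv e.symm⟩

theorem forall_sum_sq_eq_zero_iff {K : Type*} [Field K] {n : ℕ} :
    (∀ z : Fin (n + 1) → K, ∑ i, z i ^ 2 = 0 → z = 0) ↔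
      ¬∃ w : Fin n → K, ∑ i, w i ^ 2 = -1 := by
  constructor
  · rintro h ⟨w, hw⟩
    have := congrFun (h (Fin.cons 1 w) (by simp [Fin.sum_univ_succ, hw])) 0
    simp at this
  · rintro h z hz
    by_contra hz0
    obtain ⟨i, hi : z i ≠ 0⟩ := Function.ne_iff.mp hz0
    have hrest : ∑ j, z (i.succAbove j) ^ 2 = -z i ^ 2 := by
      linear_combination (Fin.sum_univ_succAbove _ i).symm.trans hz
    refine h ⟨fun j => z (i.succAbove j) / z i, ?_⟩
    simp only [div_pow, ← Finset.sum_div, hrest, neg_div, div_self (pow_ne_zero 2 hi)]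

namespace QuaternionAlgebra

variable {R S : Type*} [CommRing R] [CommRing S] [Algebra R S] {c₁ c₂ c₃ : R} {d₁ d₂ d₃ : S}
  (h₁ : algebraMap R S c₁ = d₁) (h₂ : algebraMap R S c₂ = d₂) (h₃ : algebraMap R S c₃ = d₃)

-- The target's structure constants are only propositionally the images of `c₁ c₂ c₃`, so that
-- e.g. `ℍ[S] = ℍ[S,-1,0,-1]` is a target of the base change of `ℍ[R]`.
def mapAlgebraMap : ℍ[R,c₁,c₂,c₃] →ₐ[R] ℍ[S,d₁,d₂,d₃] where
  toFun q := ⟨algebraMap R S q.re, algebraMap R S q.imI, algebraMap R S q.imJ,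
    algebraMap R S q.imK⟩
  map_one' := by ext <;> simp
  map_mul' a b := by ext <;> simp [← h₁, ← h₂, ← h₃]
  map_zero' := by ext <;> simp
  map_add' a b := by ext <;> simp
  commutes' r := by ext <;> simp [IsScalarTower.algebraMap_apply R S ℍ[S,d₁,d₂,d₃]]

theorem mapAlgebraMap_basisOneIJK (i : Fin 4) :
    mapAlgebraMap h₁ h₂ h₃ (basisOneIJK c₁ c₂ c₃ i) = basisOneIJK d₁ d₂ d₃ i := by
  fin_cases i <;> ext <;> simp [mapAlgebraMap, basisOneIJK]

theorem bijective_liftEquiv_mapAlgebraMap :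
    Function.Bijective ((mapAlgebraMap h₁ h₂ h₃).liftEquiv R S _ _) := by
  let b := Algebra.TensorProduct.basis S (basisOneIJK c₁ c₂ c₃)
  have : ((mapAlgebraMap h₁ h₂ h₃).liftEquiv R S _ _).toLinearMap =
      (b.equiv (basisOneIJK d₁ d₂ d₃) (Equiv.refl _)).toLinearMap :=
    b.ext fun i => by
      rw [LinearEquiv.coe_coe, b.equiv_apply]
      simp [b, Algebra.TensorProduct.basis_apply, mapAlgebraMap_basisOneIJK]
  exact congrArg DFunLike.coe this ▸ LinearEquiv.bijective _

noncomputable def baseChangeEquiv : S ⊗[R] ℍ[R,c₁,c₂,c₃] ≃ₐ[S] ℍ[S,d₁,d₂,d₃] :=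
  .ofBijective _ (bijective_liftEquiv_mapAlgebraMap h₁ h₂ h₃)

end QuaternionAlgebra

namespace Quaternion

noncomputable def baseChangeEquiv (R S : Type*) [CommRing R] [CommRing S] [Algebra R S] :
    S ⊗[R] ℍ[R] ≃ₐ[S] ℍ[S] :=
  QuaternionAlgebra.baseChangeEquiv (by simp) (by simp) (by simp)

theorem isUnit_iff_isUnit_normSq {R : Type*} [CommRing R] {q : ℍ[R]} :
    IsUnit q ↔ IsUnit (normSq q) := by
  refine ⟨(·.map normSq), fun ⟨u, hu⟩ => ⟨⟨q, (↑u⁻¹ : R) • star q, ?_, ?_⟩, rfl⟩⟩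
  · rw [mul_smul_comm, self_mul_star, ← hu, smul_coe, Units.inv_mul, coe_one]
  · rw [smul_mul_assoc, star_mul_self, ← hu, smul_coe, Units.inv_mul, coe_one]

theorem isDivisionRing_iff {K : Type*} [Field K] :
    IsDivisionRing ℍ[K] ↔ ∀ q : ℍ[K], normSq q = 0 → q = 0 := by
  simp only [IsDivisionRing, isUnit_iff_isUnit_normSq, isUnit_iff_ne_zero, not_imp_not]
  exact and_iff_right inferInstance

theorem forall_normSq_eq_zero_iff {R : Type*} [CommRing R] :
    (∀ q : ℍ[R], normSq q = 0 → q = 0) ↔ ∀ z : Fin 4 → R, ∑ i, z i ^ 2 = 0 → z = 0 :=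
  (equivTuple R).forall_congr fun {q} => by
    simp [normSq_def', Fin.sum_univ_four, equivTuple_apply, Quaternion.ext_iff]

end Quaternion

/-- For a field extension `K` of `ℝ`, the algebra `ℍ ⊗[ℝ] K` of quaternions with scalars
extended to `K` is a division ring if and only if the quadratic form
`x₁² + x₂² + x₃² + x₄²` has only the trivial zero on `K`, i.e. if and only if `-1` is not a
sum of three squares in `K`. -/
theorem quaternion_tensor_isDivisionRing_iff
    (K : Type*) [Field K] [Algebra ℝ K] :
    ((Nontrivial (ℍ[ℝ] ⊗[ℝ] K) ∧ ∀ x : ℍ[ℝ] ⊗[ℝ] K, x ≠ 0 → IsUnit x) ↔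
      ∀ z : Fin 4 → K, (z 0) ^ 2 + (z 1) ^ 2 + (z 2) ^ 2 + (z 3) ^ 2 = 0 → z = 0) ∧
    ((Nontrivial (ℍ[ℝ] ⊗[ℝ] K) ∧ ∀ x : ℍ[ℝ] ⊗[ℝ] K, x ≠ 0 → IsUnit x) ↔
      ¬ ∃ a b c : K, a ^ 2 + b ^ 2 + c ^ 2 = -1) := by
  let e : ℍ[ℝ] ⊗[ℝ] K ≃+* ℍ[K] :=
    ((Algebra.TensorProduct.comm ℝ ℍ[ℝ] K).trans
      ((Quaternion.baseChangeEquiv ℝ K).restrictScalars ℝ)).toRingEquiv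
  have hnorm : IsDivisionRing (ℍ[ℝ] ⊗[ℝ] K) ↔ ∀ z : Fin 4 → K, ∑ i, z i ^ 2 = 0 → z = 0 :=
    e.isDivisionRing_iff.trans
      (Quaternion.isDivisionRing_iff.trans Quaternion.forall_normSq_eq_zero_iff)
  have hthree : (¬∃ w : Fin 3 → K, ∑ i, w i ^ 2 = -1) ↔
      ¬∃ a b c : K, a ^ 2 + b ^ 2 + c ^ 2 = -1 := by
    simp [Fin.exists_fin_succ_pi, Fin.sum_univ_succ, add_assoc]
  refine ⟨?_, (hnorm.trans forall_sum_sq_eq_zero_iff).trans hthree⟩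
  simp only [Fin.sum_univ_four] at hnorm
  exact hnorm
end

section
/- Let H be a division ring of finite dimension over its center k (so k is a commutative field). Then the k-algebra H ⊗_k k(t), where k(t) is the field of rational functions in one variable over k, is a division ring. -/
open TensorProduct Polynomial

section Aux

variable (k : Type*) [Field k] (H : Type*) [DivisionRing H] [Algebra k H]

noncomputable def psiMap : (Polynomial k) ⊗[k] H →ₐ[k] (RatFunc k) ⊗[k] H :=
  Algebra.TensorProduct.map (IsScalarTower.toAlgHom k (Polynomial k) (RatFunc k)) (AlgHom.id k H)

lemma psi_injective : Function.Injective (psiMap k H) := by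
  have h1 : Function.Injective
      ((IsScalarTower.toAlgHom k (Polynomial k) (RatFunc k)).toLinearMap) :=
    RatFunc.algebraMap_injective k
  have h2 := Module.Flat.rTensor_preserves_injective_linearMap (M := H)
    (IsScalarTower.toAlgHom k (Polynomial k) (RatFunc k)).toLinearMap h1
  have heq : ⇑(psiMap k H) = ⇑(LinearMap.rTensor H
      (IsScalarTower.toAlgHom k (Polynomial k) (RatFunc k)).toLinearMap) :=
    congrArg DFunLike.coe (TensorProduct.ext' fun p h => rfl)
  rw [heq]; exact h2

noncomputable def polyTensorEquiv : (Polynomial k) ⊗[k] H ≃ₐ[k] Polynomial H :=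
  (Algebra.TensorProduct.comm k (Polynomial k) H).trans
    ((polyEquivTensor k H).symm.restrictScalars k)

instance : NoZeroDivisors ((Polynomial k) ⊗[k] H) :=
  Function.Injective.noZeroDivisors (polyTensorEquiv k H) (polyTensorEquiv k H).injective
    (map_zero _) (map_mul _)

lemma psi_tmul_one (d : Polynomial k) :
    psiMap k H (d ⊗ₜ 1) = algebraMap (RatFunc k) _ (algebraMap (Polynomial k) (RatFunc k) d) :=
  rfl

/-- common denominator -/
lemma exists_denom (x : (RatFunc k) ⊗[k] H) :
    ∃ (d : Polynomial k) (z : (Polynomial k) ⊗[k] H), d ≠ 0 ∧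
      x * algebraMap (RatFunc k) _ (algebraMap (Polynomial k) (RatFunc k) d) = psiMap k H z := by
  induction x using TensorProduct.induction_on with
  | zero => exact ⟨1, 0, one_ne_zero, by simp⟩
  | tmul r h =>
    refine ⟨r.denom, r.num ⊗ₜ h, r.denom_ne_zero, ?_⟩
    have step : (r ⊗ₜ[k] h) * algebraMap (RatFunc k) _
          (algebraMap (Polynomial k) (RatFunc k) r.denom)
        = (r * algebraMap (Polynomial k) (RatFunc k) r.denom) ⊗ₜ[k] h := by
      simp [Algebra.TensorProduct.algebraMap_apply, Algebra.TensorProduct.tmul_mul_tmul]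
    rw [step]
    have hr : r * algebraMap (Polynomial k) (RatFunc k) r.denom
        = algebraMap (Polynomial k) (RatFunc k) r.num := by
      rw [← eq_div_iff (RatFunc.algebraMap_ne_zero r.denom_ne_zero)]
      exact (RatFunc.num_div_denom r).symm
    rw [hr]
    rfl
  | add x y hx hy =>
    obtain ⟨d1, z1, hd1, h1⟩ := hx
    obtain ⟨d2, z2, hd2, h2⟩ := hy
    refine ⟨d1 * d2, z1 * (d2 ⊗ₜ 1) + z2 * (d1 ⊗ₜ 1), mul_ne_zero hd1 hd2, ?_⟩
    set M : Polynomial k → (RatFunc k) ⊗[k] H :=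
      fun d => algebraMap (RatFunc k) _ (algebraMap (Polynomial k) (RatFunc k) d) with hM
    have hMmul : ∀ d d' : Polynomial k, M (d * d') = M d * M d' := by
      intro d d'; simp [hM, map_mul]
    have hMcomm : ∀ d d' : Polynomial k, M d * M d' = M d' * M d := by
      intro d d'; rw [← hMmul, ← hMmul, mul_comm d d']
    rw [map_add, map_mul (psiMap k H) z1 (d2 ⊗ₜ 1), map_mul (psiMap k H) z2 (d1 ⊗ₜ 1),
      psi_tmul_one, psi_tmul_one, ← h1, ← h2]
    show (x + y) * M (d1 * d2) = x * M d1 * M d2 + y * M d2 * M d1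
    rw [hMmul, add_mul, ← mul_assoc, ← mul_assoc]
    congr 1
    rw [mul_assoc, mul_assoc, hMcomm]

end Aux

/-- **Corollary 3 (first part).** If `H` is a division ring of finite dimension over its
center `k`, then the `k`-algebra `H ⊗[k] k(t)`, where `k(t)` is the field of rational
functions in one variable over `k`, is a division ring. -/
theorem tensor_ratFunc_isDivisionRing
    (k : Type*) [Field k]
    (H : Type*) [DivisionRing H] [Algebra k H] [FiniteDimensional k H]
    (hcenter : Subalgebra.center k H = ⊥) :
    Nontrivial (H ⊗[k] RatFunc k) ∧
      ∀ x : H ⊗[k] RatFunc k, x ≠ 0 → IsUnit x := by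
  set K := RatFunc k
  let e : H ⊗[k] K ≃ₐ[k] K ⊗[k] H := Algebra.TensorProduct.comm k H K
  have hψ := psi_injective k H
  set M : Polynomial k → K ⊗[k] H :=
    fun d => algebraMap K (K ⊗[k] H) (algebraMap (Polynomial k) K d) with hM
  have hunit : ∀ d : Polynomial k, d ≠ 0 → IsUnit (M d) := by
    intro d hd
    have : IsUnit (algebraMap (Polynomial k) K d) :=
      isUnit_iff_ne_zero.2 ((map_ne_zero_iff _ (RatFunc.algebraMap_injective k)).2 hd)
    exact this.map (algebraMap K (K ⊗[k] H))
  have hNZD : NoZeroDivisors (K ⊗[k] H) := by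
    constructor
    intro a b hab
    by_contra hcon
    push_neg at hcon
    obtain ⟨ha, hb⟩ := hcon
    obtain ⟨da, za, hda, heqa⟩ := exists_denom k H a
    obtain ⟨db, zb, hdb, heqb⟩ := exists_denom k H b
    have hmul : psiMap k H (za * zb) = 0 := by
      rw [map_mul, ← heqa, ← heqb]
      calc a * M da * (b * M db)
          = a * ((b * M db) * M da) := by rw [mul_assoc, Algebra.commutes]
        _ = a * b * (M db * M da) := by rw [mul_assoc b, ← mul_assoc]
        _ = 0 := by rw [hab, zero_mul]
    have hz : za * zb = 0 := hψ (by simpa using hmul)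
    rcases mul_eq_zero.mp hz with h | h
    · rw [h, map_zero] at heqa
      exact ha (((hunit da hda).mul_left_eq_zero).mp heqa)
    · rw [h, map_zero] at heqb
      exact hb (((hunit db hdb).mul_left_eq_zero).mp heqb)
  have hnt : Nontrivial (K ⊗[k] H) := by
    have : Nontrivial ((Polynomial k) ⊗[k] H) := (polyTensorEquiv k H).toEquiv.nontrivial
    exact ⟨psiMap k H 0, psiMap k H 1, fun h => zero_ne_one (hψ h)⟩
  haveI := hnt
  haveI := hNZD
  haveI : IsDomain (K ⊗[k] H) := NoZeroDivisors.to_isDomain _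
  haveI : FiniteDimensional K (K ⊗[k] H) := Module.Finite.base_change k K H
  refine ⟨e.toEquiv.nontrivial, ?_⟩
  intro x hx
  have hex : e x ≠ 0 := fun h => hx (by simpa using congrArg e.symm h)
  have hu : IsUnit (e x) := FiniteDimensional.isUnit K hex
  have := hu.map (e.symm.toRingEquiv : K ⊗[k] H →+* H ⊗[k] K)
  simpa using this
end

section
/- Let k be a commutative field, n ≥ 1, and let F ∈ k[x₁, …, xₙ] be a homogeneous polynomial. If the only zero of F in kⁿ is the trivial zero (0, …, 0), then the only zero of F in k(t)ⁿ, where k(t) is the field of rational functions in one variable over k, is the trivial zero. -/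
/-!
Clearing denominators turns a zero of `F` over `k(t)` into a zero `q` over `k[t]`. Evaluating
at `t = 0` gives a zero over `k`, so every `q i` is divisible by `t`; by homogeneity `q / t` is
again a zero, and iterating shows that every `q i` is divisible by all powers of `t`, hence is `0`.
-/

open MvPolynomial Polynomial

namespace MvPolynomial

variable {R σ : Type*} [CommSemiring R]

def HasOnlyTrivialZero (F : MvPolynomial σ R) (A : Type*) [CommSemiring A] [Algebra R A] :
    Prop :=
  ∀ z : σ → A, aeval z F = 0 → z = 0

namespace IsHomogeneous

variable {F : MvPolynomial σ R} {d : ℕ}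

theorem aeval_smul {S : Type*} [CommSemiring S] [Algebra R S] (hF : F.IsHomogeneous d) (c : S)
    (z : σ → S) : MvPolynomial.aeval (c • z) F = c ^ d * MvPolynomial.aeval z F := by
  simp only [MvPolynomial.aeval_def, eval₂_eq, Finset.mul_sum, Pi.smul_apply, smul_eq_mul,
    mul_pow, Finset.prod_mul_distrib, Finset.prod_pow_eq_pow_sum]
  refine Finset.sum_congr rfl fun m hm => ?_
  have hdeg : ∑ i ∈ m.support, m i = d := by
    simpa [Finsupp.weight_apply, Finsupp.sum] using hF (mem_support_iff.mp hm)
  rw [hdeg]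
  ring

theorem pow_dvd_of_aeval_eq_zero {A : Type*} [CommSemiring A] [Algebra R A]
    (hF : F.IsHomogeneous d) {π : A} (hπ : π ∈ nonZeroDivisors A)
    (hdvd : ∀ z : σ → A, MvPolynomial.aeval z F = 0 → ∀ i, π ∣ z i) (N : ℕ) :
    ∀ z : σ → A, MvPolynomial.aeval z F = 0 → ∀ i, π ^ N ∣ z i := by
  induction N with
  | zero => simp
  | succ N ih =>
    intro z hz
    choose w hw using hdvd z hz
    have hzw : z = π • w := by ext i; exact hw i
    have hw0 : MvPolynomial.aeval w F = 0 := by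
      rw [hzw, hF.aeval_smul] at hz
      exact (pow_mem hπ d).2 _ (by rwa [mul_comm] at hz)
    intro i
    rw [hw i, pow_succ']
    exact mul_dvd_mul_left π (ih w hw0 i)

theorem hasOnlyTrivialZero_polynomial (hF : F.IsHomogeneous d) (h : F.HasOnlyTrivialZero R) :
    F.HasOnlyTrivialZero R[X] := by
  have hX : ∀ q : σ → R[X], MvPolynomial.aeval q F = 0 → ∀ i, Polynomial.X ∣ q i := by
    intro q hq i
    have heval := comp_aeval_apply (f := q) (Polynomial.aeval (0 : R)) F
    rw [hq, map_zero] at heval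
    rw [X_dvd_iff, coeff_zero_eq_aeval_zero]
    exact congrFun (h _ heval.symm) i
  intro q hq
  ext i n : 2
  exact X_pow_dvd_iff.1 (hF.pow_dvd_of_aeval_eq_zero X_mem_nonzeroDivisors hX (n + 1) q hq i) n
    n.lt_succ_self

theorem hasOnlyTrivialZero_of_isFractionRing {A K : Type*} [CommRing A] [Field K] [Algebra R A]
    [Algebra A K] [Algebra R K] [IsScalarTower R A K] [IsFractionRing A K] [Finite σ]
    (hF : F.IsHomogeneous d) (h : F.HasOnlyTrivialZero A) : F.HasOnlyTrivialZero K := by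
  intro z hz
  obtain ⟨⟨b, hb⟩, hint⟩ := IsLocalization.exist_integer_multiples_of_finite (nonZeroDivisors A) z
  choose q hq using hint
  have hbz : algebraMap A K ∘ q = algebraMap A K b • z := by ext i; simp [hq, Algebra.smul_def]
  have hq0 : q = 0 := by
    refine h q ((aeval_algebraMap_eq_zero_iff_of_injective K (IsFractionRing.injective A K)).1 ?_)
    rw [hbz, hF.aeval_smul, hz, mul_zero]
  have hb0 : algebraMap A K b ≠ 0 :=
    (IsLocalization.map_units K (⟨b, hb⟩ : nonZeroDivisors A)).ne_zero
  ext i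
  simpa [hq0, hb0] using (congrFun hbz i).symm

end IsHomogeneous

end MvPolynomial

theorem only_trivial_zero_ratFunc_general
    (k : Type*) [Field k] (n : ℕ) (d : ℕ)
    (F : MvPolynomial (Fin n) k) (hF : F.IsHomogeneous d)
    (h : ∀ z : Fin n → k, MvPolynomial.eval z F = 0 → z = 0) :
    ∀ z : Fin n → RatFunc k, MvPolynomial.aeval z F = 0 → z = 0 :=
  hF.hasOnlyTrivialZero_of_isFractionRing (hF.hasOnlyTrivialZero_polynomial h)

/-- If a homogeneous polynomial `F` in `n ≥ 1` variables over a field `k` has only the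
trivial zero on `k`, then it has only the trivial zero on the field `k(t)` of rational
functions in one variable over `k`. -/
theorem only_trivial_zero_ratFunc
    (k : Type*) [Field k] (n : ℕ) (hn : 1 ≤ n) (d : ℕ)
    (F : MvPolynomial (Fin n) k) (hF : F.IsHomogeneous d)
    (h : ∀ z : Fin n → k, MvPolynomial.eval z F = 0 → z = 0) :
    ∀ z : Fin n → RatFunc k, MvPolynomial.aeval z F = 0 → z = 0 :=
  only_trivial_zero_ratFunc_general k n d F hF h
end

section
/- Let k be a commutative field, n ≥ 1, and let F ∈ k[x₁, …, xₙ] be a homogeneous polynomial. If the only zero of F in kⁿ is the trivial zero (0, …, 0), then the only zero of F in k((t))ⁿ, where k((t)) is the field of formal Laurent series in one variable over k, is the trivial zero. -/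
/-!
Multiplying a nontrivial zero `z` of `F` by a suitable power of `X` makes every coordinate a power
series and at least one of them a unit; by homogeneity this is still a zero of `F`. Its vector of
constant coefficients is then a nontrivial zero of `F` over `k`.
-/

open MvPolynomial

theorem MvPolynomial.IsHomogeneous.aeval_smul_s7 {R S σ : Type*} [CommSemiring R] [CommSemiring S]
    [Algebra R S] {φ : MvPolynomial σ R} {n : ℕ} (hφ : φ.IsHomogeneous n)
    (c : S) (x : σ → S) :
    MvPolynomial.aeval (c • x) φ = c ^ n * MvPolynomial.aeval x φ := by
  simp only [aeval_def, eval₂_eq, Finset.mul_sum]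
  refine Finset.sum_congr rfl fun s hs => ?_
  have hdeg : ∑ i ∈ s.support, s i = n := by
    rw [← Finsupp.degree_apply, Finsupp.degree_eq_weight_one]
    exact hφ (mem_support_iff.mp hs)
  simp only [Pi.smul_apply, smul_eq_mul, mul_pow, Finset.prod_mul_distrib,
    Finset.prod_pow_eq_pow_sum, hdeg]
  ring

theorem PowerSeries.constantCoeff_aeval {R σ : Type*} [CommSemiring R] (w : σ → PowerSeries R)
    (φ : MvPolynomial σ R) :
    constantCoeff (MvPolynomial.aeval w φ) = eval (fun i => constantCoeff (w i)) φ := by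
  rw [aeval_def, hom_eval₂, algebraMap_eq, constantCoeff_comp_C, eval₂_id]

theorem LaurentSeries.coe_aeval {R σ : Type*} [CommSemiring R] (w : σ → PowerSeries R)
    (φ : MvPolynomial σ R) :
    ((MvPolynomial.aeval w φ : PowerSeries R) : LaurentSeries R) =
      MvPolynomial.aeval (fun i => (w i : LaurentSeries R)) φ := by
  rw [aeval_def, hom_eval₂]
  -- `algebraMap R R⸨X⸩` is by definition `ofPowerSeries` composed with `algebraMap R R⟦X⟧`.
  rfl

open HahnSeries in
theorem LaurentSeries.exists_coe_eq_single_mul {R ι : Type*} [Semiring R] [Finite ι]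
    (z : ι → LaurentSeries R) (hz : z ≠ 0) :
    ∃ (m : ℤ) (w : ι → PowerSeries R),
      (∀ i, (w i : LaurentSeries R) = single m 1 * z i) ∧
        ∃ i, PowerSeries.constantCoeff (w i) ≠ 0 := by
  classical
  have := Fintype.ofFinite ι
  obtain ⟨i₀, hi₀, hmin⟩ := Finset.exists_min_image {i | z i ≠ 0} (fun i => (z i).order)
    (by simpa [Finset.Nonempty, Function.ne_iff] using hz)
  simp only [Finset.mem_filter, Finset.mem_univ, true_and] at hi₀ hmin
  refine ⟨-(z i₀).order,
    fun i => PowerSeries.X ^ ((z i).order - (z i₀).order).toNat * (z i).powerSeriesPart,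
    fun i => ?_, i₀, ?_⟩
  · rcases eq_or_ne (z i) 0 with hi | hi
    · simp [hi]
    rw [map_mul, ofPowerSeries_X_pow, ofPowerSeries_powerSeriesPart, ← mul_assoc,
      single_mul_single, mul_one, Int.toNat_of_nonneg (sub_nonneg.mpr (hmin i hi))]
    congr 3
    ring
  · dsimp only
    rw [sub_self, Int.toNat_zero, pow_zero, one_mul,
      ← PowerSeries.coeff_zero_eq_constantCoeff_apply, powerSeriesPart_coeff,
      Nat.cast_zero, add_zero]
    exact coeff_order_eq_zero.not.mpr hi₀

theorem only_trivial_zero_laurentSeries_general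
    (k : Type*) [Field k] (n : ℕ) (d : ℕ)
    (F : MvPolynomial (Fin n) k) (hF : F.IsHomogeneous d)
    (h : ∀ z : Fin n → k, MvPolynomial.eval z F = 0 → z = 0) :
    ∀ z : Fin n → LaurentSeries k, MvPolynomial.aeval z F = 0 → z = 0 := by
  intro z hz
  by_contra hz₀
  obtain ⟨m, w, hw, i, hi⟩ := LaurentSeries.exists_coe_eq_single_mul z hz₀
  have hw₀ : MvPolynomial.aeval w F = 0 := by
    apply HahnSeries.ofPowerSeries_injective (Γ := ℤ)
    rw [LaurentSeries.coe_aeval, funext hw, map_zero]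
    exact (hF.aeval_smul_s7 _ z).trans (by rw [hz, mul_zero])
  have hc : MvPolynomial.eval (fun i => PowerSeries.constantCoeff (w i)) F = 0 := by
    rw [← PowerSeries.constantCoeff_aeval, hw₀, map_zero]
  exact hi (congrFun (h _ hc) i)

/-- If a homogeneous polynomial `F` in `n ≥ 1` variables over a field `k` has only the
trivial zero on `k`, then it has only the trivial zero on the field `k((t))` of formal Laurent
series in one variable over `k`. -/
theorem only_trivial_zero_laurentSeries
    (k : Type*) [Field k] (n : ℕ) (hn : 1 ≤ n) (d : ℕ)
    (F : MvPolynomial (Fin n) k) (hF : F.IsHomogeneous d)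
    (h : ∀ z : Fin n → k, MvPolynomial.eval z F = 0 → z = 0) :
    ∀ z : Fin n → LaurentSeries k, MvPolynomial.aeval z F = 0 → z = 0 :=
  only_trivial_zero_laurentSeries_general k n d F hF h
end

section
/- Let H be a division ring of finite dimension over its center k, and let k ⊆ L ⊆ M be a tower of commutative field extensions of k. In the k-algebra H ⊗_k M, the centralizer of the image of H ⊗_k L under the canonical map H ⊗_k L → H ⊗_k M equals the subalgebra 1 ⊗ M (the image of k ⊗_k M), which is also the center of H ⊗_k M. -/
/-!
Since `M` is free over the field `k`, the centralizer of `H ⊗ 1` in `H ⊗[k] M` is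
`Z(H) ⊗ M = k ⊗ M = 1 ⊗ M`. The image of `H ⊗[k] L` contains `H ⊗ 1`, and `1 ⊗ M` is central
because `M` is commutative, so
`center ≤ centralizer (H ⊗ L) ≤ centralizer (H ⊗ 1) = 1 ⊗ M ≤ center`.
-/

open TensorProduct Algebra.TensorProduct

lemma Algebra.TensorProduct.range_includeLeft_le_range_map {R A B C : Type*} [CommSemiring R]
    [Semiring A] [Algebra R A] [Semiring B] [Algebra R B] [Semiring C] [Algebra R C]
    (f : B →ₐ[R] C) :
    (includeLeft : A →ₐ[R] A ⊗[R] C).range ≤ (map (AlgHom.id R A) f).range := by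
  rw [map_range]
  exact le_sup_left

namespace Subalgebra

variable (R A B : Type*) [CommSemiring R] [Semiring A] [Algebra R A]

lemma range_includeRight_le_center [CommSemiring B] [Algebra R B] :
    (includeRight : B →ₐ[R] A ⊗[R] B).range ≤ center R (A ⊗[R] B) := by
  simpa [center_eq_top, Algebra.map_top] using includeRight_map_center_le R A B

lemma centralizer_range_includeLeft_eq_range_includeRight [Semiring B] [Algebra R B]
    [Module.Free R B] (hA : center R A = ⊥) :
    centralizer R (includeLeft : A →ₐ[R] A ⊗[R] B).range =
      (includeRight : B →ₐ[R] A ⊗[R] B).range := by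
  rw [centralizer_coe_range_includeLeft_eq_center_tensorProduct, map_range, hA,
    AlgHom.range_comp, range_val, Algebra.map_bot, bot_sup_eq, AlgHom.comp_id]

end Subalgebra

theorem centralizer_tensor_tower_eq_general
    (k : Type*) [Field k]
    (H : Type*) [DivisionRing H] [Algebra k H]
    (hcenter : Subalgebra.center k H = ⊥)
    (L M : Type*) [Field L] [Field M] [Algebra k L] [Algebra k M]
    [Algebra L M] [IsScalarTower k L M] :
    Subalgebra.centralizer k
        (Set.range
          (Algebra.TensorProduct.map (AlgHom.id k H) (IsScalarTower.toAlgHom k L M)) :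
          Set (H ⊗[k] M)) =
        (Algebra.TensorProduct.includeRight : M →ₐ[k] H ⊗[k] M).range ∧
      (Algebra.TensorProduct.includeRight : M →ₐ[k] H ⊗[k] M).range =
        Subalgebra.center k (H ⊗[k] M) := by
  have centralizer_le_range : Subalgebra.centralizer k (Set.range
      (map (AlgHom.id k H) (IsScalarTower.toAlgHom k L M))) ≤ includeRight.range := by
    rw [← Subalgebra.centralizer_range_includeLeft_eq_range_includeRight k H M hcenter]
    exact Subalgebra.centralizer_le k _ _ (range_includeLeft_le_range_map _)
  have range_le_center := Subalgebra.range_includeRight_le_center k H M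
  have center_le := Subalgebra.center_le_centralizer k (Set.range
    (map (AlgHom.id k H) (IsScalarTower.toAlgHom k L M)))
  exact ⟨le_antisymm centralizer_le_range (range_le_center.trans center_le),
    le_antisymm range_le_center (center_le.trans centralizer_le_range)⟩

/-- **Lemma 4.b.** Let `H` be a division ring of finite dimension over its center `k` and let
`k ⊆ L ⊆ M` be a tower of commutative field extensions. In `H ⊗[k] M`, the centralizer of
the image of `H ⊗[k] L` under the canonical map equals `1 ⊗ M` (the image of `M` under the
right inclusion), which is also the center of `H ⊗[k] M`. -/
theorem centralizer_tensor_tower_eq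
    (k : Type*) [Field k]
    (H : Type*) [DivisionRing H] [Algebra k H] [FiniteDimensional k H]
    (hcenter : Subalgebra.center k H = ⊥)
    (L M : Type*) [Field L] [Field M] [Algebra k L] [Algebra k M]
    [Algebra L M] [IsScalarTower k L M] :
    Subalgebra.centralizer k
        (Set.range
          (Algebra.TensorProduct.map (AlgHom.id k H) (IsScalarTower.toAlgHom k L M)) :
          Set (H ⊗[k] M)) =
        (Algebra.TensorProduct.includeRight : M →ₐ[k] H ⊗[k] M).range ∧
      (Algebra.TensorProduct.includeRight : M →ₐ[k] H ⊗[k] M).range =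
        Subalgebra.center k (H ⊗[k] M) :=
  centralizer_tensor_tower_eq_general k H hcenter L M
end

section
/- Let k be a commutative field and let H be a division ring of finite dimension over its center k. Assume PIGCP_k holds: for every n and every homogeneous polynomial F ∈ k[x₁, …, xₙ] having only the trivial zero on k, and for every finite group G, there exists a finite Galois extension L/k(t) with Galois group isomorphic to G such that F has only the trivial zero on L. Then for every finite group G there exist a division ring Ω and an injective ring homomorphism f : H ⊗_k k(t) → Ω such that the group Γ of ring automorphisms of Ω fixing the image of f pointwise is isomorphic to G, and the set of elements of Ω fixed by every element of Γ is exactly the image of f. -/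
/-!
Let `N` be the norm form of `H` over `k`, `N(x) = det(y ↦ x y)` written in coordinates. As `H` is a division ring, `N` has only the trivial zero on `k`, so `PIGCP k`
provides a `G`-Galois extension `L/k(t)` on which `N` still has only the trivial zero; then
every nonzero element of `Ω = L ⊗[k] H` has invertible left multiplication, so `Ω` is a
division ring. The group `Gal(L/k(t))` acts on `Ω` through the first factor, fixing the image
of `H ⊗[k] k(t)`. Conversely an automorphism of `Ω` fixing that image fixes `1 ⊗ H`, hence
preserves its centralizer, which is `L ⊗ 1` because `H` is central; so it comes from an
automorphism of `L` over `k(t)`. Finally, an element fixed by the Galois group has all its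
coordinates along a `k`-basis of `H` in `k(t)`.
-/

open TensorProduct


/-- The group of ring automorphisms of `Ω` fixing the image of `f : A →+* Ω` pointwise. -/
def ringFixingGroup {A Ω : Type*} [NonAssocSemiring A] [NonAssocSemiring Ω]
    (f : A →+* Ω) : Subgroup (RingAut Ω) where
  carrier := {g | ∀ a, g (f a) = f a}
  one_mem' := fun _ => rfl
  mul_mem' := by
    intro g h hg hh a
    show g (h (f a)) = f a
    rw [hh, hg]
  inv_mem' := by
    intro g hg a
    apply g.injective
    show g (g.symm (f a)) = g (f a)
    rw [RingEquiv.apply_symm_apply, hg]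

/-- `PIGCP k` (inverse Galois problem with polynomial constraint over `k`): for every
homogeneous polynomial `F` with coefficients in `k` having only the trivial zero on `k` and
every finite group `G`, there is a finite Galois extension `L/k(t)` of group `G` such that
`F` has only the trivial zero on `L`. -/
def PIGCP (k : Type) [Field k] : Prop :=
  ∀ (n d : ℕ) (F : MvPolynomial (Fin n) k), F.IsHomogeneous d →
    (∀ z : Fin n → k, MvPolynomial.eval z F = 0 → z = 0) →
    ∀ (G : Type) [Group G] [Finite G],
      ∃ (L : Type) (fL : Field L) (aL : Algebra k L) (aRL : Algebra (RatFunc k) L),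
        letI := fL; letI := aL; letI := aRL;
        IsScalarTower k (RatFunc k) L ∧
        FiniteDimensional (RatFunc k) L ∧ IsGalois (RatFunc k) L ∧
        Nonempty (G ≃* (L ≃ₐ[RatFunc k] L)) ∧
        ∀ z : Fin n → L, MvPolynomial.aeval z F = 0 → z = 0

open Algebra.TensorProduct MvPolynomial

section NormForm

variable {k H : Type*} [CommRing k] [Ring H] [Algebra k H]
  {ι : Type*} [Fintype ι] [DecidableEq ι] (b : Module.Basis ι k H)

/-- The determinant of left multiplication by the generic element `∑ l, X l • b l`. -/
noncomputable def normForm : MvPolynomial ι k :=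
  Matrix.det (Matrix.of fun i j => ∑ l, C (b.repr (b l * b j) i) * X l)

theorem isHomogeneous_normForm : (normForm b).IsHomogeneous (Fintype.card ι) := by
  rw [normForm, Matrix.det_apply']
  refine IsHomogeneous.sum _ _ _ fun σ _ => ?_
  have hprod := IsHomogeneous.prod Finset.univ
    (fun i => ∑ l, C (b.repr (b l * b i) (σ i)) * X l) (fun _ => 1) fun i _ =>
      IsHomogeneous.sum _ _ _ fun l _ => isHomogeneous_C_mul_X (b.repr (b l * b i) (σ i)) l
  simp only [Finset.sum_const, smul_eq_mul, mul_one, Finset.card_univ] at hprod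
  simpa using hprod.C_mul ((Equiv.Perm.sign σ : ℤ) : k)

theorem eval_normForm (x : H) :
    eval (b.equivFun x) (normForm b) = (Algebra.leftMulMatrix b x).det := by
  rw [normForm, RingHom.map_det]
  congr 1
  ext i j
  have hx : x = ∑ l, b.repr x l • b l := (b.sum_repr x).symm
  rw [Algebra.leftMulMatrix_eq_repr_mul]
  conv_rhs => rw [hx, Finset.sum_mul, map_sum, Finsupp.finsetSum_apply]
  simp [mul_comm]

theorem normForm_baseChange (A : Type*) [CommRing A] [Algebra k A] :
    normForm (b.baseChange A) = map (algebraMap k A) (normForm b) := by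
  rw [normForm, normForm, RingHom.map_det]
  congr 1
  ext i j
  simp [Module.Basis.baseChange_apply, tmul_mul_tmul, Algebra.algebraMap_eq_smul_one]

end NormForm

section NormFormField

variable {K S ι : Type*} [Field K] [Ring S] [Algebra K S] [Fintype ι] [DecidableEq ι]
  (b : Module.Basis ι K S)

theorem isUnit_iff_det_leftMulMatrix_ne_zero (x : S) :
    IsUnit x ↔ (Algebra.leftMulMatrix b x).det ≠ 0 := by
  have := Module.Finite.of_basis b
  rw [Algebra.leftMulMatrix_apply, LinearMap.det_toMatrix, ← isUnit_iff_ne_zero,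
    ← LinearMap.isUnit_iff_isUnit_det, Algebra.lmul_isUnit_iff]

theorem normForm_anisotropic_iff :
    (∀ z : ι → K, eval z (normForm b) = 0 → z = 0) ↔ ∀ x : S, x ≠ 0 → IsUnit x := by
  simp_rw [isUnit_iff_det_leftMulMatrix_ne_zero b, ← eval_normForm]
  constructor
  · intro h x hx hN
    exact hx (b.equivFun.map_eq_zero_iff.mp (h _ hN))
  · intro h z hz
    by_contra hz0
    refine h (b.equivFun.symm z) (b.equivFun.symm.map_ne_zero_iff.mpr hz0) ?_
    rwa [LinearEquiv.apply_symm_apply]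

end NormFormField

theorem isUnit_of_aeval_normForm_anisotropic {k H K ι : Type*} [CommRing k] [Ring H]
    [Algebra k H] [Field K] [Algebra k K] [Fintype ι] [DecidableEq ι] (b : Module.Basis ι k H)
    (h : ∀ z : ι → K, aeval z (normForm b) = 0 → z = 0) (x : K ⊗[k] H) (hx : x ≠ 0) :
    IsUnit x :=
  (normForm_anisotropic_iff (b.baseChange K)).mp
    (by simpa [normForm_baseChange, eval_map, aeval_def] using h) x hx

theorem centralizer_range_includeRight_of_center_eq_bot {R A B : Type*} [CommSemiring R]
    [Semiring A] [Algebra R A] [Semiring B] [Algebra R B] [Module.Free R A]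
    (h : Subalgebra.center R B = ⊥) :
    Subalgebra.centralizer R ((includeRight : B →ₐ[R] A ⊗[R] B).range : Set (A ⊗[R] B)) =
      (includeLeft : A →ₐ[R] A ⊗[R] B).range := by
  rw [Subalgebra.centralizer_range_includeRight_eq_center_tensorProduct, h, map_range]
  refine sup_eq_left.mpr ?_
  rintro _ ⟨⟨_, r, rfl⟩, rfl⟩
  exact ⟨algebraMap R A r, by simp [Algebra.algebraMap_eq_smul_one]⟩

section Galois

variable (k F L H : Type*) [Field k] [Field F] [Field L] [Algebra k F] [Algebra k L]
  [Algebra F L] [IsScalarTower k F L] [Ring H] [Algebra k H]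

noncomputable def tensorEmbedding : H ⊗[k] F →ₐ[k] L ⊗[k] H :=
  (map (IsScalarTower.toAlgHom k F L) (AlgHom.id k H)).comp (Algebra.TensorProduct.comm k H F)

variable {k F L H}

@[simp]
theorem tensorEmbedding_tmul (h : H) (r : F) :
    tensorEmbedding k F L H (h ⊗ₜ r) = algebraMap F L r ⊗ₜ h := rfl

theorem tensorEmbedding_injective : Function.Injective (tensorEmbedding k F L H) :=
  (Module.Flat.rTensor_preserves_injective_linearMap (M := H)
    (IsScalarTower.toAlgHom k F L).toLinearMap (algebraMap F L).injective).comp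
    (Algebra.TensorProduct.comm k H F).injective

variable (k H) in
noncomputable def galAction : Gal(L/F) →* RingAut (L ⊗[k] H) where
  toFun σ := (congr σ (.refl : H ≃ₐ[k] H)).toRingEquiv
  map_one' := by ext x; exact DFunLike.congr_fun congr_refl x
  map_mul' σ τ := by
    ext x
    exact DFunLike.congr_fun (Algebra.TensorProduct.congr_trans τ σ .refl .refl) x

@[simp]
theorem galAction_tmul (σ : Gal(L/F)) (c : L) (h : H) :
    galAction k H σ (c ⊗ₜ h) = σ c ⊗ₜ h := rfl

theorem galAction_mem_ringFixingGroup (σ : Gal(L/F)) :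
    galAction k H σ ∈ ringFixingGroup (tensorEmbedding k F L H).toRingHom := by
  intro a
  induction a using TensorProduct.induction_on with
  | zero => simp
  | tmul h r => simp
  | add u v hu hv => simp_all

theorem galAction_injective [Nontrivial H] :
    Function.Injective (galAction k H : Gal(L/F) →* RingAut (L ⊗[k] H)) := by
  intro σ τ h
  ext c
  apply includeLeft_injective (S := k) (algebraMap k H).injective
  simpa using DFunLike.congr_fun h (c ⊗ₜ 1)

section Fixing

variable {g : RingAut (L ⊗[k] H)} (hg : g ∈ ringFixingGroup (tensorEmbedding k F L H).toRingHom)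
include hg

theorem apply_tmul_one_of_mem_ringFixingGroup (h : H) : g (1 ⊗ₜ h) = 1 ⊗ₜ h := by
  simpa using hg (h ⊗ₜ 1)

theorem apply_algebraMap_of_mem_ringFixingGroup (r : F) :
    g (algebraMap F (L ⊗[k] H) r) = algebraMap F (L ⊗[k] H) r := by
  simpa using hg (1 ⊗ₜ r)

theorem exists_tmul_one_eq_of_mem_ringFixingGroup (hH : Subalgebra.center k H = ⊥) (c : L) :
    ∃ c' : L, c' ⊗ₜ[k] (1 : H) = g (c ⊗ₜ 1) := by
  have hcomm : g (c ⊗ₜ 1) ∈ Subalgebra.centralizer k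
      ((includeRight : H →ₐ[k] L ⊗[k] H).range : Set (L ⊗[k] H)) := by
    rintro _ ⟨h, rfl⟩
    change (1 : L) ⊗ₜ h * _ = _ * (1 ⊗ₜ h)
    rw [← apply_tmul_one_of_mem_ringFixingGroup hg, ← map_mul, ← map_mul,
      tmul_mul_tmul, tmul_mul_tmul, one_mul, mul_one, one_mul, mul_one]
  rw [centralizer_range_includeRight_of_center_eq_bot hH] at hcomm
  exact hcomm

theorem exists_galAction_eq_of_mem_ringFixingGroup [Nontrivial H] [FiniteDimensional F L]
    (hH : Subalgebra.center k H = ⊥) : ∃ σ : Gal(L/F), galAction k H σ = g := by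
  let G : L ⊗[k] H ≃ₐ[F] L ⊗[k] H :=
    AlgEquiv.ofRingEquiv (f := g) (apply_algebraMap_of_mem_ringFixingGroup hg)
  let ι : L →ₐ[F] L ⊗[k] H := includeLeft
  have hι : Function.Injective ι := includeLeft_injective (algebraMap k H).injective
  let σ : L →ₐ[F] L := ((AlgEquiv.ofInjective ι hι).symm : ι.range →ₐ[F] L).comp
    ((G.toAlgHom.comp ι).codRestrict ι.range
      (exists_tmul_one_eq_of_mem_ringFixingGroup hg hH))
  have hσ (c : L) : σ c ⊗ₜ 1 = g (c ⊗ₜ 1) :=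
    congrArg Subtype.val ((AlgEquiv.ofInjective ι hι).apply_symm_apply _)
  refine ⟨AlgEquiv.ofBijective σ (Algebra.IsAlgebraic.algHom_bijective σ), ?_⟩
  have hG : congr (AlgEquiv.ofBijective σ (Algebra.IsAlgebraic.algHom_bijective σ))
      (.refl : H ≃ₐ[k] H) = G :=
    AlgEquiv.coe_toAlgHom_injective <| Algebra.TensorProduct.ext (AlgHom.ext hσ)
      (AlgHom.ext fun h => by simpa [G] using (apply_tmul_one_of_mem_ringFixingGroup hg h).symm)
  ext x
  exact DFunLike.congr_fun hG x

end Fixing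

theorem baseChange_repr_galAction {ι : Type*} (b : Module.Basis ι k H) (σ : Gal(L/F))
    (x : L ⊗[k] H) (i : ι) :
    (b.baseChange L).repr (galAction k H σ x) i = σ ((b.baseChange L).repr x i) := by
  induction x using TensorProduct.induction_on with
  | zero => simp
  | tmul c h =>
    rw [galAction_tmul, Module.Basis.baseChange_repr_tmul, Module.Basis.baseChange_repr_tmul]
    exact (map_smul (σ.restrictScalars k) _ c).symm
  | add u v hu hv => simp_all

theorem mem_range_tensorEmbedding_of_forall_galAction_eq [FiniteDimensional F L] [IsGalois F L]
    (x : L ⊗[k] H) (hx : ∀ σ : Gal(L/F), galAction k H σ x = x) :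
    x ∈ Set.range (tensorEmbedding k F L H) := by
  let b := Module.Free.chooseBasis k H
  have hfixed (i) : (b.baseChange L).repr x i ∈ Set.range (algebraMap F L) :=
    (IsGalois.mem_range_algebraMap_iff_fixed _).mpr fun σ => by
      rw [← baseChange_repr_galAction, hx]
  choose r hr using hfixed
  refine ⟨∑ i ∈ ((b.baseChange L).repr x).support, b i ⊗ₜ r i, ?_⟩
  conv_rhs => rw [← (b.baseChange L).linearCombination_repr x, Finsupp.linearCombination_apply]
  simp [Finsupp.sum, hr, TensorProduct.smul_tmul']

variable (k F L H) in
noncomputable def galEquivRingFixingGroup [Nontrivial H] [FiniteDimensional F L]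
    (hH : Subalgebra.center k H = ⊥) :
    Gal(L/F) ≃* ringFixingGroup (tensorEmbedding k F L H).toRingHom :=
  MulEquiv.ofBijective ((galAction k H).codRestrict _ galAction_mem_ringFixingGroup)
    ⟨fun _ _ h => galAction_injective (congrArg Subtype.val h),
      fun ⟨_, hg⟩ => (exists_galAction_eq_of_mem_ringFixingGroup hg hH).imp
        fun _ hσ => Subtype.ext hσ⟩

end Galois

/-- **Main theorem.** Let `k` be a commutative field and `H` a division ring of finite
dimension over its center `k`. If `PIGCP k` has a positive answer, then every finite group
is the Galois group (in Artin's sense) of a Galois extension of the skew field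
`H(t) ≅ H ⊗[k] k(t)` of rational fractions with central indeterminate. -/
theorem main_theorem
    (k : Type) [Field k]
    (H : Type) [DivisionRing H] [Algebra k H] [FiniteDimensional k H]
    (hcenter : Subalgebra.center k H = ⊥)
    (hPIGCP : PIGCP k)
    (G : Type) [Group G] [Finite G] :
    ∃ (Ω : Type) (dΩ : DivisionRing Ω), letI := dΩ;
      ∃ f : (H ⊗[k] RatFunc k) →+* Ω,
        Function.Injective f ∧
        Nonempty (G ≃* ringFixingGroup f) ∧
        ∀ x : Ω, (∀ g ∈ ringFixingGroup f, g x = x) → x ∈ Set.range f := by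
  let b := Module.finBasis k H
  obtain ⟨L, _, _, _, _, _, _, ⟨eG⟩, hL⟩ := hPIGCP _ _ (normForm b) (isHomogeneous_normForm b)
    ((normForm_anisotropic_iff b).mpr fun _ hx => isUnit_iff_ne_zero.mpr hx) G
  let _ : DivisionRing (L ⊗[k] H) := DivisionRing.ofIsUnitOrEqZero fun x =>
    or_iff_not_imp_right.mpr (isUnit_of_aeval_normForm_anisotropic b hL x)
  exact ⟨L ⊗[k] H, inferInstance, (tensorEmbedding k (RatFunc k) L H).toRingHom,
    tensorEmbedding_injective, ⟨eG.trans (galEquivRingFixingGroup k (RatFunc k) L H hcenter)⟩,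
    fun x hx => mem_range_tensorEmbedding_of_forall_galAction_eq x fun σ =>
      hx _ (galAction_mem_ringFixingGroup σ)⟩
end
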